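/- Let X and Y be jointly Gaussian real random variables with mean zero, and let n ≥ 1 be an odd natural number. Then E[X·Y^n] = n·E[X·Y]·E[Y^(n-1)]. -/

import Mathlib

/-!
Gaussian integration by parts against the density gives the moment recursion
`E[Y^(n+1)] = n v E[Y^(n-1)]` for `Y ~ N(0, v)`. If `v ≠ 0`, the residual `Z = v X - E[XY] Y`
is uncorrelated with `Y`; as `(Z, Y)` is jointly Gaussian, `Z` is independent of `Y`, so
`E[Z Y^n] = E[Z] E[Y^n] = 0`, i.e. `v E[X Y^n] = E[XY] E[Y^(n+1)]`, and the recursion finishes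
the proof. If `v = 0`, then `Y = 0` almost surely and both sides vanish.
-/

open MeasureTheory ProbabilityTheory
open scoped NNReal

namespace ProbabilityTheory

lemma hasDerivAt_gaussianPDFReal_zero (v : ℝ≥0) (x : ℝ) :
    HasDerivAt (gaussianPDFReal 0 v) (-(x / v) * gaussianPDFReal 0 v x) x := by
  have hexp : HasDerivAt (fun y : ℝ ↦ -y ^ 2 / (2 * v)) (-(x / v)) x := by
    refine ((hasDerivAt_pow 2 x).fun_neg.div_const (2 * (v : ℝ))).congr_deriv ?_
    rcases eq_or_ne (v : ℝ) 0 with hv | hv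
    · simp [hv]
    · field_simp
      ring
  have h := hexp.exp.const_mul (√(2 * Real.pi * v))⁻¹
  simp only [gaussianPDFReal_def, sub_zero] at h ⊢
  exact h.congr_deriv (by ring)

lemma integrable_pow_gaussianReal (μ : ℝ) (v : ℝ≥0) (n : ℕ) :
    Integrable (fun x : ℝ ↦ x ^ n) (gaussianReal μ v) :=
  integrable_pow_of_mem_interior_integrableExpSet
    (by simp [integrableExpSet_fun_id_gaussianReal]) n

lemma integrable_pow_mul_gaussianPDFReal (μ : ℝ) {v : ℝ≥0} (hv : v ≠ 0) (n : ℕ) :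
    Integrable (fun x : ℝ ↦ x ^ n * gaussianPDFReal μ v x) := by
  have h := integrable_pow_gaussianReal μ v n
  rw [gaussianReal_of_var_ne_zero μ hv, gaussianPDF_def,
    integrable_withDensity_iff_integrable_smul' (by fun_prop) (by simp)] at h
  refine h.congr (ae_of_all _ fun x ↦ ?_)
  simp [ENNReal.toReal_ofReal (gaussianPDFReal_nonneg μ v x), mul_comm]

lemma integral_pow_succ_mul_gaussianPDFReal {v : ℝ≥0} (hv : v ≠ 0) (n : ℕ) :
    ∫ x, x ^ (n + 1) * gaussianPDFReal 0 v x
      = n * v * ∫ x, x ^ (n - 1) * gaussianPDFReal 0 v x := by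
  have hint := integrable_pow_mul_gaussianPDFReal 0 hv
  -- `x φ(x) = -v φ'(x)` for the density `φ`, so integrate `x ^ n` against `(-v φ)'`.
  have ibp := integral_mul_deriv_eq_deriv_mul_of_integrable
    (u := fun x : ℝ ↦ x ^ n) (v := fun x ↦ -v * gaussianPDFReal 0 v x)
    (fun x _ ↦ hasDerivAt_pow n x)
    (fun x _ ↦ (hasDerivAt_gaussianPDFReal_zero v x).const_mul (-v : ℝ))
    ((hint (n + 1)).congr <| ae_of_all _ fun x ↦ by
      simp only [Pi.mul_apply]; field_simp; ring)
    (((hint (n - 1)).const_mul (-(n * v))).congr <| ae_of_all _ fun x ↦ by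
      simp only [Pi.mul_apply]; ring)
    (((hint n).const_mul (-v)).congr <| ae_of_all _ fun x ↦ by
      simp only [Pi.mul_apply]; ring)
  have e1 : (fun x : ℝ ↦ x ^ n * (-v * (-(x / v) * gaussianPDFReal 0 v x)))
      = fun x ↦ x ^ (n + 1) * gaussianPDFReal 0 v x := by
    funext x
    field_simp
    ring
  have e2 : (fun x : ℝ ↦ (n * x ^ (n - 1)) * (-v * gaussianPDFReal 0 v x))
      = fun x ↦ -(n * v) * (x ^ (n - 1) * gaussianPDFReal 0 v x) := by
    funext x
    ring
  rw [e1, e2, integral_const_mul] at ibp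
  rw [ibp]
  ring

lemma integral_pow_succ_gaussianReal (v : ℝ≥0) (n : ℕ) :
    ∫ x, x ^ (n + 1) ∂gaussianReal 0 v = n * v * ∫ x, x ^ (n - 1) ∂gaussianReal 0 v := by
  rcases eq_or_ne v 0 with rfl | hv
  · simp [gaussianReal_zero_var]
  simp only [integral_gaussianReal_eq_integral_smul hv, smul_eq_mul,
    mul_comm (gaussianPDFReal 0 v _)]
  exact integral_pow_succ_mul_gaussianPDFReal hv n

lemma integral_sq_gaussianReal (v : ℝ≥0) : ∫ x, x ^ 2 ∂gaussianReal 0 v = v := by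
  simp [integral_pow_succ_gaussianReal v 1]

variable {Ω : Type*} [MeasurableSpace Ω] {P : Measure Ω}

lemma hasLaw_of_map_eq_gaussianReal {Y : Ω → ℝ} {μ : ℝ} {v : ℝ≥0}
    (h : P.map Y = gaussianReal μ v) : HasLaw Y (gaussianReal μ v) P :=
  ⟨AEMeasurable.of_map_ne_zero (by rw [h]; exact IsProbabilityMeasure.ne_zero _), h⟩

lemma HasLaw.integral_pow_gaussianReal {Y : Ω → ℝ} {μ : ℝ} {v : ℝ≥0}
    (hY : HasLaw Y (gaussianReal μ v) P) (n : ℕ) :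
    ∫ ω, Y ω ^ n ∂P = ∫ x, x ^ n ∂gaussianReal μ v :=
  hY.integral_comp (f := fun x ↦ x ^ n) (by fun_prop)

lemma HasLaw.integrable_pow_gaussianReal {Y : Ω → ℝ} {μ : ℝ} {v : ℝ≥0}
    (hY : HasLaw Y (gaussianReal μ v) P) (n : ℕ) : Integrable (fun ω ↦ Y ω ^ n) P := by
  have h := ProbabilityTheory.integrable_pow_gaussianReal μ v n
  rwa [← hY.map_eq, integrable_map_measure (by fun_prop) hY.aemeasurable] at h

def IsCenteredGaussianPair (X Y : Ω → ℝ) (P : Measure Ω) : Prop :=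
  ∀ a b : ℝ, ∃ v : ℝ≥0, P.map (fun ω ↦ a * X ω + b * Y ω) = gaussianReal 0 v

namespace IsCenteredGaussianPair

variable {X Y : Ω → ℝ}

lemma exists_hasLaw_fst (h : IsCenteredGaussianPair X Y P) :
    ∃ v : ℝ≥0, HasLaw X (gaussianReal 0 v) P := by
  obtain ⟨v, hv⟩ := h 1 0
  exact ⟨v, hasLaw_of_map_eq_gaussianReal (by simpa using hv)⟩

lemma exists_hasLaw_snd (h : IsCenteredGaussianPair X Y P) :
    ∃ v : ℝ≥0, HasLaw Y (gaussianReal 0 v) P := by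
  obtain ⟨v, hv⟩ := h 0 1
  exact ⟨v, hasLaw_of_map_eq_gaussianReal (by simpa using hv)⟩

lemma integral_fst (h : IsCenteredGaussianPair X Y P) : ∫ ω, X ω ∂P = 0 := by
  obtain ⟨v, hX⟩ := h.exists_hasLaw_fst
  rw [hX.integral_eq, integral_id_gaussianReal]

lemma integral_snd (h : IsCenteredGaussianPair X Y P) : ∫ ω, Y ω ∂P = 0 := by
  obtain ⟨v, hY⟩ := h.exists_hasLaw_snd
  rw [hY.integral_eq, integral_id_gaussianReal]

lemma integrable_mul_pow (h : IsCenteredGaussianPair X Y P) (n : ℕ) :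
    Integrable (fun ω ↦ X ω * Y ω ^ n) P := by
  obtain ⟨u, hX⟩ := h.exists_hasLaw_fst
  obtain ⟨v, hY⟩ := h.exists_hasLaw_snd
  refine ((hX.integrable_pow_gaussianReal 2).add (hY.integrable_pow_gaussianReal (2 * n))).mono'
    (hX.aemeasurable.mul (hY.aemeasurable.pow_const n)).aestronglyMeasurable
    (ae_of_all _ fun ω ↦ ?_)
  simp only [Pi.add_apply, Real.norm_eq_abs, abs_le, pow_mul']
  constructor <;> nlinarith [sq_nonneg (X ω + Y ω ^ n), sq_nonneg (X ω - Y ω ^ n)]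

lemma linearCombination_left (h : IsCenteredGaussianPair X Y P) (a b : ℝ) :
    IsCenteredGaussianPair (fun ω ↦ a * X ω + b * Y ω) Y P := fun c d ↦ by
  obtain ⟨v, hv⟩ := h (c * a) (c * b + d)
  exact ⟨v, by convert hv using 3; ring⟩

lemma hasGaussianLaw (h : IsCenteredGaussianPair X Y P) :
    HasGaussianLaw (fun ω ↦ (X ω, Y ω)) P := by
  obtain ⟨u, hX⟩ := h.exists_hasLaw_fst
  obtain ⟨v, hY⟩ := h.exists_hasLaw_snd
  refine ⟨isGaussian_of_map_eq_gaussianReal fun L ↦ ?_⟩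
  obtain ⟨w, hw⟩ := h (L (1, 0)) (L (0, 1))
  refine ⟨0, w, ?_⟩
  rw [AEMeasurable.map_map_of_aemeasurable (by fun_prop)
    (hX.aemeasurable.prodMk hY.aemeasurable), ← hw]
  congr 1
  funext ω
  rw [Function.comp_apply,
    show (X ω, Y ω) = X ω • ((1 : ℝ), (0 : ℝ)) + Y ω • ((0 : ℝ), (1 : ℝ)) by simp, map_add,
    map_smul, map_smul, smul_eq_mul, smul_eq_mul, mul_comm, mul_comm (Y ω)]

lemma indepFun_of_integral_mul_eq_zero (h : IsCenteredGaussianPair X Y P)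
    (hXY : ∫ ω, X ω * Y ω ∂P = 0) : IndepFun X Y P := by
  refine h.hasGaussianLaw.indepFun_of_covariance_eq_zero ?_
  simp [covariance, h.integral_fst, h.integral_snd, hXY]

lemma mul_integral_mul_pow {v : ℝ≥0} (h : IsCenteredGaussianPair X Y P)
    (hY : HasLaw Y (gaussianReal 0 v) P) (n : ℕ) :
    v * ∫ ω, X ω * Y ω ^ n ∂P = (∫ ω, X ω * Y ω ∂P) * ∫ ω, Y ω ^ (n + 1) ∂P := by
  set C := ∫ ω, X ω * Y ω ∂P
  have hZ := h.linearCombination_left v (-C)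
  have hZY : IndepFun (fun ω ↦ v * X ω + -C * Y ω) Y P := by
    refine hZ.indepFun_of_integral_mul_eq_zero ?_
    have hYY : Integrable (fun ω ↦ Y ω ^ 2) P := hY.integrable_pow_gaussianReal 2
    simp_rw [add_mul, mul_assoc, ← pow_two]
    rw [integral_add (by simpa using (h.integrable_mul_pow 1).const_mul _) (hYY.const_mul _),
      integral_const_mul, integral_const_mul, hY.integral_pow_gaussianReal,
      integral_sq_gaussianReal]
    ring
  obtain ⟨w, hZlaw⟩ := hZ.exists_hasLaw_fst
  have hZYn := hZY.integral_fun_comp_mul_comp (f := id) (g := (· ^ n))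
    hZlaw.aemeasurable hY.aemeasurable (by fun_prop) (by fun_prop)
  simp only [id, hZ.integral_fst, zero_mul, add_mul, mul_assoc, ← pow_succ'] at hZYn
  rw [integral_add ((h.integrable_mul_pow n).const_mul _)
    ((hY.integrable_pow_gaussianReal _).const_mul _), integral_const_mul,
    integral_const_mul] at hZYn
  linear_combination hZYn

lemma integral_mul_pow_of_snd_ae_eq_zero (h : IsCenteredGaussianPair X Y P)
    (hY : Y =ᵐ[P] 0) (n : ℕ) :
    ∫ ω, X ω * Y ω ^ n ∂P = n * (∫ ω, X ω * Y ω ∂P) * ∫ ω, Y ω ^ (n - 1) ∂P := by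
  have hXY : ∫ ω, X ω * Y ω ∂P = 0 :=
    integral_eq_zero_of_ae (hY.mono fun ω hω ↦ by simp [hω])
  rw [hXY, integral_congr_ae (g := fun ω ↦ X ω * 0 ^ n) (hY.mono fun ω hω ↦ by simp [hω]),
    integral_mul_const, h.integral_fst]
  ring

end IsCenteredGaussianPair

end ProbabilityTheory

theorem stmt0_general {Ω : Type*} [MeasurableSpace Ω] (P : Measure Ω)
    (X Y : Ω → ℝ)
    (hGauss : ∀ a b : ℝ, ∃ v : NNReal,
      Measure.map (fun ω => a * X ω + b * Y ω) P = gaussianReal 0 v)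
    (n : ℕ) :
    ∫ ω, X ω * (Y ω) ^ n ∂P
      = n * (∫ ω, X ω * Y ω ∂P) * ∫ ω, (Y ω) ^ (n - 1) ∂P := by
  have h : IsCenteredGaussianPair X Y P := hGauss
  obtain ⟨v, hY⟩ := h.exists_hasLaw_snd
  rcases eq_or_ne v 0 with rfl | hv
  · rw [gaussianReal_zero_var] at hY
    exact h.integral_mul_pow_of_snd_ae_eq_zero hY.ae_eq_of_dirac n
  apply mul_left_cancel₀ (NNReal.coe_ne_zero.mpr hv)
  rw [h.mul_integral_mul_pow hY, hY.integral_pow_gaussianReal, hY.integral_pow_gaussianReal,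
    integral_pow_succ_gaussianReal]
  ring

/-- Isserlis-type consequence: for jointly centered Gaussian `X, Y` and odd `n ≥ 1`,
`E[X·Yⁿ] = n·E[X·Y]·E[Yⁿ⁻¹]`. -/
theorem stmt0 {Ω : Type*} [MeasurableSpace Ω] (P : Measure Ω) [IsProbabilityMeasure P]
    (X Y : Ω → ℝ)
    (hGauss : ∀ a b : ℝ, ∃ v : NNReal,
      Measure.map (fun ω => a * X ω + b * Y ω) P = gaussianReal 0 v)
    (n : ℕ) (hn : Odd n) (hn1 : 1 ≤ n) :
    ∫ ω, X ω * (Y ω) ^ n ∂P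
      = n * (∫ ω, X ω * Y ω ∂P) * ∫ ω, (Y ω) ^ (n - 1) ∂P :=
  stmt0_general P X Y hGauss n
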